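/- Combined elliptic stability: let a, ã ∈ 𝒜 with principals A, Ã, and let g, g̃ : [0,1] → ℝ be C¹ with |g'(s)| ≥ c₀ > 0. Suppose (i) |(A∘g)'(s) − (Ã∘g̃)'(s)| ≤ δ₁ for all s, and (ii) ‖g − g̃‖_∞ + ‖g' − g̃'‖_∞ ≤ δ₂. Then |a(r) − ã(r)| ≤ (δ₁ + (a_ub + C₁‖g'‖_∞)·δ₂)/c₀ for every r in the range of g. -/

import Mathlib

/-!
By the chain rule `(A ∘ g)' = a(g) g'` and `(B ∘ h)' = b(h) h'`, and
`(a(g) - b(g)) g' = (a(g) g' - b(h) h') + b(h) (h' - g') + (b(h) - b(g)) g'`.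
The first term is the measured flux mismatch `δ₁`, the second is at most `a_ub ‖g' - h'‖_∞`,
the third at most `C₁ ‖g - h‖_∞ ‖g'‖_∞` by the Lipschitz bound on `b`; dividing by `|g'| ≥ c₀`
bounds `a - b` at every point `g s`.
-/

theorem continuous_of_abs_sub_le_mul {f : ℝ → ℝ} {C : ℝ}
    (hf : ∀ x y, |f x - f y| ≤ C * |x - y|) : Continuous f :=
  (LipschitzWith.of_dist_le' (K := C) (by simpa only [Real.dist_eq] using hf)).continuous

theorem hasDerivAt_intervalIntegral_comp {f g : ℝ → ℝ} {g' s : ℝ} (c : ℝ) (hf : Continuous f)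
    (hg : HasDerivAt g g' s) :
    HasDerivAt (fun t => ∫ r in c..g t, f r) (f (g s) * g') s :=
  (hf.integral_hasStrictDerivAt c (g s)).hasDerivAt.comp s hg

theorem abs_sub_mul_le_of_perturbation (α β β' p q : ℝ) :
    |(α - β) * p| ≤ |α * p - β' * q| + |β'| * |p - q| + |β' - β| * |p| := by
  calc |(α - β) * p| = |(α * p - β' * q) + β' * (q - p) + (β' - β) * p| := by ring_nf
    _ ≤ |α * p - β' * q| + |β' * (q - p)| + |(β' - β) * p| := abs_add_three _ _ _
    _ = |α * p - β' * q| + |β'| * |p - q| + |β' - β| * |p| := by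
      rw [abs_mul, abs_mul, abs_sub_comm q]

/-- Combined elliptic stability. Let `a, b` be admissible
(Lipschitz with constant `C₁`, `0 < a_lb ≤ a, b ≤ a_ub`) with principals
`A s = ∫₀ˢ a`, `B s = ∫₀ˢ b`, and let `g, h` be C¹ on `[0,1]` with
`|g'| ≥ c₀ > 0` and `‖g'‖_∞ ≤ Mg`. If
(i) `|(A∘g)'(s) − (B∘h)'(s)| ≤ δ₁` on `[0,1]`, and
(ii) `‖g − h‖_∞ + ‖g' − h'‖_∞ ≤ δ₂` on `[0,1]`, then
`|a r − b r| ≤ (δ₁ + (a_ub + C₁·Mg)·δ₂)/c₀` for every `r` in the range of `g`. -/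
theorem combined_elliptic_stability
    (a b : ℝ → ℝ)
    (a_lb a_ub : ℝ) (hlb : 0 < a_lb)
    (hbnd : ∀ s : ℝ, a_lb ≤ a s ∧ a s ≤ a_ub ∧ a_lb ≤ b s ∧ b s ≤ a_ub)
    (C₁ : ℝ) (hC₁ : 0 ≤ C₁)
    (haLip : ∀ x y : ℝ, |a x - a y| ≤ C₁ * |x - y|)
    (hbLip : ∀ x y : ℝ, |b x - b y| ≤ C₁ * |x - y|)
    (g g' h h' : ℝ → ℝ)
    (hg : ∀ s ∈ Set.Icc (0:ℝ) 1, HasDerivAt g (g' s) s)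
    (hh : ∀ s ∈ Set.Icc (0:ℝ) 1, HasDerivAt h (h' s) s)
    (c₀ : ℝ) (hc₀ : 0 < c₀) (hglb : ∀ s ∈ Set.Icc (0:ℝ) 1, c₀ ≤ |g' s|)
    (Mg : ℝ) (hMg : ∀ s ∈ Set.Icc (0:ℝ) 1, |g' s| ≤ Mg)
    (δ₁ δ₂ : ℝ)
    (hδ₁ : ∀ s ∈ Set.Icc (0:ℝ) 1,
      |deriv (fun t => ∫ r in (0:ℝ)..(g t), a r) s -
        deriv (fun t => ∫ r in (0:ℝ)..(h t), b r) s| ≤ δ₁)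
    (hδ₂ : ∀ s ∈ Set.Icc (0:ℝ) 1, |g s - h s| + |g' s - h' s| ≤ δ₂) :
    ∀ r ∈ g '' Set.Icc (0:ℝ) 1,
      |a r - b r| ≤ (δ₁ + (a_ub + C₁ * Mg) * δ₂) / c₀ := by
  rintro _ ⟨s, hs, rfl⟩
  have hA := hasDerivAt_intervalIntegral_comp 0 (continuous_of_abs_sub_le_mul haLip) (hg s hs)
  have hB := hasDerivAt_intervalIntegral_comp 0 (continuous_of_abs_sub_le_mul hbLip) (hh s hs)
  have hflux : |a (g s) * g' s - b (h s) * h' s| ≤ δ₁ := by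
    simpa only [hA.deriv, hB.deriv] using hδ₁ s hs
  obtain ⟨-, -, hb_lb, hb_ub⟩ := hbnd (h s)
  have hb_abs : |b (h s)| ≤ a_ub := by rw [abs_of_pos (hlb.trans_le hb_lb)]; exact hb_ub
  have hb_lip : |b (h s) - b (g s)| ≤ C₁ * |g s - h s| := by
    rw [abs_sub_comm (g s)]; exact hbLip _ _
  have hMg_nonneg : 0 ≤ Mg := (abs_nonneg _).trans (hMg s hs)
  have hδ₂s := hδ₂ s hs
  rw [le_div_iff₀ hc₀]
  calc |a (g s) - b (g s)| * c₀ ≤ |(a (g s) - b (g s)) * g' s| := by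
        rw [abs_mul]; gcongr; exact hglb s hs
    _ ≤ |a (g s) * g' s - b (h s) * h' s| + |b (h s)| * |g' s - h' s|
          + |b (h s) - b (g s)| * |g' s| := abs_sub_mul_le_of_perturbation _ _ _ _ _
    _ ≤ δ₁ + a_ub * |g' s - h' s| + C₁ * |g s - h s| * Mg := by
        gcongr
        exact hMg s hs
    _ ≤ δ₁ + (a_ub + C₁ * Mg) * δ₂ := by
        have ha_ub : 0 ≤ a_ub := (abs_nonneg _).trans hb_abs
        nlinarith [abs_nonneg (g s - h s), abs_nonneg (g' s - h' s), mul_nonneg hC₁ hMg_nonneg]
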